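/- arXiv:1001.4319 — 7 statements merged into one kernel-verified Lean document; each statement's English description precedes it below -/
import Mathlib

section
/- Let α₁, α₂, α₃, α₄ ∈ ℂ satisfy α₁·conj(α₄) − conj(α₂)·α₃ = 1, and suppose that α₁·conj(α₃) ∈ ℝ and α₂·conj(α₄) ∈ ℝ. Then αⱼ·conj(αⱼ′) ∈ ℝ for every j, j′ ∈ {1,2,3,4}. -/
/-!
Write `a, b, c, d` for `α 0, …, α 3`. Multiplying the normalization `a d̄ - b̄ c = 1` by `b c̄`
gives `b c̄ + |b c̄|² = (a c̄)(b d̄) ∈ ℝ`, so `b c̄ ∈ ℝ`, and then `a d̄ = 1 + b̄ c ∈ ℝ`.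
Multiplying it by `b ā` and by `d c̄` instead gives `b ā = |a|² (b d̄) - |b|² (c ā)` and
`d c̄ = |d|² (a c̄) - |c|² (d b̄)`, both real. The remaining pairs follow by conjugation.
-/

open ComplexConjugate

namespace Complex

lemma im_mul_conj_self (z : ℂ) : (z * conj z).im = 0 := by
  rw [mul_conj, ofReal_im]

lemma im_mul_conj_swap {z w : ℂ} (h : (z * conj w).im = 0) : (w * conj z).im = 0 := by
  have : w * conj z = conj (z * conj w) := by rw [map_mul, conj_conj, mul_comm]
  rw [this, conj_im, h, neg_zero]

lemma im_mul_eq_zero {z w : ℂ} (hz : z.im = 0) (hw : w.im = 0) : (z * w).im = 0 := by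
  rw [mul_im, hz, hw, mul_zero, zero_mul, add_zero]

lemma im_eq_zero_of_im_mul_one_add_conj {w : ℂ} (h : (w * (1 + conj w)).im = 0) :
    w.im = 0 := by
  rwa [mul_add, mul_one, mul_conj, add_im, ofReal_im, add_zero] at h

end Complex

open Complex

/-- Lemma 3 of the paper: if `α₁ conj α₄ - conj α₂ α₃ = 1` and
`α₁ conj α₃, α₂ conj α₄ ∈ ℝ`, then `αⱼ conj αⱼ' ∈ ℝ` for all `j, j'`. -/
theorem stmt0 (α : Fin 4 → ℂ)
    (hA1 : α 0 * conj (α 3) - conj (α 1) * α 2 = 1)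
    (hA2a : (α 0 * conj (α 2)).im = 0)
    (hA2b : (α 1 * conj (α 3)).im = 0) :
    ∀ j j' : Fin 4, (α j * conj (α j')).im = 0 := by
  have h12 : (α 1 * conj (α 2)).im = 0 := by
    apply im_eq_zero_of_im_mul_one_add_conj
    have : α 1 * conj (α 2) * (1 + conj (α 1 * conj (α 2))) =
        α 0 * conj (α 2) * (α 1 * conj (α 3)) := by
      rw [map_mul, conj_conj]
      linear_combination (-(α 1 * conj (α 2))) * hA1
    rw [this]
    exact im_mul_eq_zero hA2a hA2b
  have h03 : (α 0 * conj (α 3)).im = 0 := by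
    rw [eq_add_of_sub_eq hA1, add_im, one_im, zero_add, mul_comm]
    exact im_mul_conj_swap h12
  have h01 : (α 0 * conj (α 1)).im = 0 := by
    apply im_mul_conj_swap
    have : α 1 * conj (α 0) = α 0 * conj (α 0) * (α 1 * conj (α 3)) -
        α 1 * conj (α 1) * (α 2 * conj (α 0)) := by
      linear_combination (-(α 1 * conj (α 0))) * hA1
    rw [this, sub_im, im_mul_eq_zero (im_mul_conj_self _) hA2b,
      im_mul_eq_zero (im_mul_conj_self _) (im_mul_conj_swap hA2a), sub_zero]
  have h23 : (α 2 * conj (α 3)).im = 0 := by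
    apply im_mul_conj_swap
    have : α 3 * conj (α 2) = α 0 * conj (α 2) * (α 3 * conj (α 3)) -
        α 2 * conj (α 2) * (α 3 * conj (α 1)) := by
      linear_combination (-(α 3 * conj (α 2))) * hA1
    rw [this, sub_im, im_mul_eq_zero hA2a (im_mul_conj_self _),
      im_mul_eq_zero (im_mul_conj_self _) (im_mul_conj_swap hA2b), sub_zero]
  intro j j'
  fin_cases j <;> fin_cases j' <;>
    first
    | exact im_mul_conj_self _
    | assumption
    | exact im_mul_conj_swap ‹_›
end

section
/- If z₁, z₂ ∈ ℂ satisfy z₁·conj(z₂) = (1 − (|z₁|² + |z₂|²))/√2, then |z₁ + z₂·e^{iπ/4}| = 1 and |z₁ + z₂·e^{−iπ/4}| = 1. -/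
open ComplexConjugate Real

namespace Complex

theorem sq_norm_add_mul_of_mul_conj_eq_ofReal {z₁ z₂ w : ℂ} {r : ℝ} (h : z₁ * conj z₂ = r)
    (hw : ‖w‖ = 1) : ‖z₁ + z₂ * w‖ ^ 2 = ‖z₁‖ ^ 2 + ‖z₂‖ ^ 2 + 2 * r * w.re := by
  rw [Complex.sq_norm, normSq_add, map_mul (starRingEnd ℂ), ← mul_assoc, h, re_ofReal_mul,
    conj_re, normSq_mul, normSq_eq_norm_sq w, hw, normSq_eq_norm_sq, normSq_eq_norm_sq]
  ring

theorem norm_add_mul_eq_one_of_re_eq {z₁ z₂ w : ℂ}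
    (h : z₁ * conj z₂ = (((1 - (‖z₁‖ ^ 2 + ‖z₂‖ ^ 2)) / √2 : ℝ) : ℂ))
    (hw : ‖w‖ = 1) (hre : w.re = √2 / 2) : ‖z₁ + z₂ * w‖ = 1 := by
  rw [← pow_eq_one_iff_of_nonneg (norm_nonneg _) two_ne_zero,
    sq_norm_add_mul_of_mul_conj_eq_ofReal h hw, hre]
  field_simp
  ring

theorem exp_I_mul_ofReal_re (θ : ℝ) : (exp (I * θ)).re = Real.cos θ := by
  rw [mul_comm, exp_ofReal_mul_I_re]

end Complex

open Complex in
/-- Lemma 5 of the paper: if `z₁ conj z₂ = (1 - (|z₁|² + |z₂|²))/√2`, then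
`|z₁ + z₂ e^{±iπ/4}| = 1`. -/
theorem stmt2 (z₁ z₂ : ℂ)
    (h : z₁ * conj z₂ =
      (((1 - (‖z₁‖ ^ 2 + ‖z₂‖ ^ 2)) / Real.sqrt 2 : ℝ) : ℂ)) :
    ‖z₁ + z₂ * Complex.exp (Complex.I * (π / 4))‖ = 1 ∧
    ‖z₁ + z₂ * Complex.exp (-(Complex.I * (π / 4)))‖ = 1 := by
  have hplus : I * (π / 4 : ℂ) = I * ((π / 4 : ℝ) : ℂ) := by push_cast; rfl
  have hminus : -(I * (π / 4 : ℂ)) = I * ((-(π / 4) : ℝ) : ℂ) := by push_cast; ring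
  rw [hminus, hplus]
  constructor <;> refine norm_add_mul_eq_one_of_re_eq h (norm_exp_I_mul_ofReal _) ?_
  · rw [exp_I_mul_ofReal_re, cos_pi_div_four]
  · rw [exp_I_mul_ofReal_re, Real.cos_neg, cos_pi_div_four]
end

section
/- Let α = (α₁, α₂, α₃, α₄) ∈ ℂ⁴ belong to the class 𝒜. For all complex numbers u₁, u₂, v₁, v₂, set uΛ := α₁·u₁ + α₂·u₂, uΛ′ := α₃·u₁ + α₄·u₂, vΛ := α₁·v₁ + α₂·v₂, vΛ′ := α₃·v₁ + α₄·v₂. Then (conj(u₂)·v₁ − conj(u₁)·v₂) − (conj(uΛ′)·vΛ − conj(uΛ)·vΛ′) = 0. -/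
open ComplexConjugate

theorem Complex.conj_mul_eq_mul_conj_of_im_eq_zero {a b : ℂ} (h : (a * conj b).im = 0) :
    conj a * b = a * conj b := by
  rw [← Complex.conj_eq_iff_im.mpr h, map_mul, Complex.conj_conj]

/-- Lemma 6 of the paper: if `(α₁, α₂, α₃, α₄)` belongs to the class 𝒜, and the
boundary values at `Λ` are obtained from those at `-Λ` by the boundary condition
BC(α), then the Wronskian defect vanishes. -/
theorem stmt5 (α₁ α₂ α₃ α₄ : ℂ)
    (hA1 : α₁ * conj α₄ - conj α₂ * α₃ = 1)
    (hA2a : (α₁ * conj α₃).im = 0) (hA2b : (α₂ * conj α₄).im = 0)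
    (u₁ u₂ v₁ v₂ : ℂ) :
    (conj u₂ * v₁ - conj u₁ * v₂) -
      (conj (α₃ * u₁ + α₄ * u₂) * (α₁ * v₁ + α₂ * v₂) -
       conj (α₁ * u₁ + α₂ * u₂) * (α₃ * v₁ + α₄ * v₂)) = 0 := by
  have h₁₃ : conj α₁ * α₃ = α₁ * conj α₃ := Complex.conj_mul_eq_mul_conj_of_im_eq_zero hA2a
  have h₂₄ : conj α₂ * α₄ = α₂ * conj α₄ := Complex.conj_mul_eq_mul_conj_of_im_eq_zero hA2b
  have hA1_conj : conj α₁ * α₄ - α₂ * conj α₃ = 1 := by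
    simpa only [map_sub, map_mul, Complex.conj_conj, map_one, mul_comm] using congrArg conj hA1
  simp only [map_add, map_mul]
  -- The Wronskian at `Λ` is a Hermitian form in `(u, v)`: (𝒜2) kills its `ū₁v₁` and `ū₂v₂`
  -- coefficients, while (𝒜1) and its conjugate make the `ū₂v₁` and `ū₁v₂` ones equal to `1` and `-1`.
  linear_combination (-(conj u₂ * v₁)) * hA1 + (conj u₁ * v₂) * hA1_conj +
    (conj u₁ * v₁) * h₁₃ + (conj u₂ * v₂) * h₂₄
end

section
/- Fix Λ > 0, θ_L, θ_R ∈ [0,π) ∪ (π,2π), and α_L, α_R ∈ ℝ, and set γ_L := e^{i(θ_L + √2·Λ)} and γ_R := e^{i(θ_R + √2·Λ)}. Then the following are equivalent: (i) for every c_L, c_R ∈ ℂ the function ψ := c_L·(L₊ + γ_L·L₋) + c_R·(R₊ + γ_R·R₋) satisfies ψ′(−Λ) = α_L·ψ(−Λ) and ψ′(Λ) = α_R·ψ(Λ), where the one-sided boundary values and derivatives are ψ(−Λ) = c_L·(L₊(−Λ) + γ_L·L₋(−Λ)), ψ′(−Λ) = c_L·(((1−i)/√2)·L₊(−Λ) +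 γ_L·((1+i)/√2)·L₋(−Λ)), ψ(Λ) = c_R·(R₊(Λ) + γ_R·R₋(Λ)), ψ′(Λ) = c_R·(((−1+i)/√2)·R₊(Λ) + γ_R·((−1−i)/√2)·R₋(Λ)); (ii) √2·(1 + cos θ_L)·α_L = 1 + cos θ_L − sin θ_L and √2·(1 + cos θ_R)·α_R = −(1 + cos θ_R − sin θ_R). -/
open ComplexConjugate Real

/-- The normalization factor `N = 2^{1/4} e^{Λ/√2}` of the paper. -/
noncomputable def Nc (Λ : ℝ) : ℂ :=
  (((2 : ℝ) ^ ((1 : ℝ) / 4) * Real.exp (Λ / Real.sqrt 2) : ℝ) : ℂ)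

/-- `L₊(x) = N e^{(1-i)x/√2}` for `x < -Λ`, and `0` beyond the junction. -/
noncomputable def Lp (Λ : ℝ) (x : ℝ) : ℂ :=
  if x < -Λ then Nc Λ * Complex.exp ((1 - Complex.I) * x / Real.sqrt 2) else 0

/-- `L₋(x) = N e^{(1+i)x/√2}` for `x < -Λ`, and `0` beyond the junction. -/
noncomputable def Lm (Λ : ℝ) (x : ℝ) : ℂ :=
  if x < -Λ then Nc Λ * Complex.exp ((1 + Complex.I) * x / Real.sqrt 2) else 0

/-- `R₊(x) = N e^{(-1+i)x/√2}` for `x > Λ`, and `0` beyond the junction. -/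
noncomputable def Rp (Λ : ℝ) (x : ℝ) : ℂ :=
  if Λ < x then Nc Λ * Complex.exp ((-1 + Complex.I) * x / Real.sqrt 2) else 0

/-- `R₋(x) = N e^{(-1-i)x/√2}` for `x > Λ`, and `0` beyond the junction. -/
noncomputable def Rm (Λ : ℝ) (x : ℝ) : ℂ :=
  if Λ < x then Nc Λ * Complex.exp ((-1 - Complex.I) * x / Real.sqrt 2) else 0

/-- One-sided boundary value `L₊(-Λ) = N e^{-(1-i)Λ/√2}`. -/
noncomputable def LpB (Λ : ℝ) : ℂ := Nc Λ * Complex.exp (-((1 - Complex.I) * Λ) / Real.sqrt 2)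

/-- One-sided boundary value `L₋(-Λ) = N e^{-(1+i)Λ/√2}`. -/
noncomputable def LmB (Λ : ℝ) : ℂ := Nc Λ * Complex.exp (-((1 + Complex.I) * Λ) / Real.sqrt 2)

/-- One-sided boundary value `R₊(Λ) = N e^{(-1+i)Λ/√2}`. -/
noncomputable def RpB (Λ : ℝ) : ℂ := Nc Λ * Complex.exp ((-1 + Complex.I) * Λ / Real.sqrt 2)

/-- One-sided boundary value `R₋(Λ) = N e^{(-1-i)Λ/√2}`. -/
noncomputable def RmB (Λ : ℝ) : ℂ := Nc Λ * Complex.exp ((-1 - Complex.I) * Λ / Real.sqrt 2)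

/-!
Since `L₋(-Λ) / L₊(-Λ) = e^{-i√2Λ}`, the coefficient `γ_L` turns `γ_L L₋(-Λ)` into `z L₊(-Λ)` with
`z = e^{iθ_L}`, and after cancelling `L₊(-Λ) ≠ 0` the left Robin condition becomes
`(1 - i) + (1 + i) z = √2 α_L (1 + z)`. Its real part is the stated equation; its imaginary part
follows from the real part because `|z| = 1` and `1 + cos θ_L ≠ 0`. The right end is the mirror
image, with the derivative factors negated.
-/

open Complex

lemma ofReal_sqrt_two_ne_zero : ((Real.sqrt 2 : ℝ) : ℂ) ≠ 0 := by
  exact_mod_cast (Real.sqrt_pos.mpr two_pos).ne'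

lemma ofReal_sqrt_two_sq : ((Real.sqrt 2 : ℝ) : ℂ) ^ 2 = 2 := by
  exact_mod_cast Real.sq_sqrt zero_le_two

lemma one_add_cos_ne_zero {θ : ℝ} (h₁ : -π < θ) (h₂ : θ < 3 * π) (hπ : θ ≠ π) :
    1 + Real.cos θ ≠ 0 := by
  intro h
  have hcos : Real.cos (θ - π) = 1 := by rw [Real.cos_sub_pi]; linarith
  rw [Real.cos_eq_one_iff_of_lt_of_lt (by linarith) (by linarith)] at hcos
  exact hπ (sub_eq_zero.mp hcos)

lemma one_sub_I_add_one_add_I_mul_exp_eq_iff {θ β : ℝ} (hc : 1 + Real.cos θ ≠ 0) :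
    (1 - I) + (1 + I) * exp (θ * I) = β * (1 + exp (θ * I)) ↔
      (1 + Real.cos θ) * β = 1 + Real.cos θ - Real.sin θ := by
  rw [exp_mul_I, ← ofReal_cos, ← ofReal_sin, Complex.ext_iff]
  simp only [add_re, sub_re, mul_re, add_im, sub_im, mul_im, one_re, one_im, I_re, I_im,
    ofReal_re, ofReal_im]
  constructor
  · rintro ⟨hre, -⟩
    linarith
  · intro h
    refine ⟨by linarith, mul_left_cancel₀ hc ?_⟩
    linear_combination (-Real.sin θ) * h + Real.sin_sq_add_cos_sq θ

lemma Nc_ne_zero (Λ : ℝ) : Nc Λ ≠ 0 := by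
  unfold Nc
  exact_mod_cast (mul_pos (by positivity) (Real.exp_pos _)).ne'

lemma LpB_ne_zero (Λ : ℝ) : LpB Λ ≠ 0 := mul_ne_zero (Nc_ne_zero Λ) (Complex.exp_ne_zero _)

lemma RpB_ne_zero (Λ : ℝ) : RpB Λ ≠ 0 := mul_ne_zero (Nc_ne_zero Λ) (Complex.exp_ne_zero _)

lemma exp_mul_LmB (Λ θ : ℝ) :
    exp (I * (θ + Real.sqrt 2 * Λ)) * LmB Λ = exp (θ * I) * LpB Λ := by
  have hs := ofReal_sqrt_two_ne_zero
  unfold LmB LpB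
  rw [mul_left_comm, ← Complex.exp_add, mul_left_comm _ (Nc Λ), ← Complex.exp_add]
  congr 2
  field_simp
  linear_combination (I * Λ) * ofReal_sqrt_two_sq

lemma exp_mul_RmB (Λ θ : ℝ) :
    exp (I * (θ + Real.sqrt 2 * Λ)) * RmB Λ = exp (θ * I) * RpB Λ := by
  have hs := ofReal_sqrt_two_ne_zero
  unfold RmB RpB
  rw [mul_left_comm, ← Complex.exp_add, mul_left_comm _ (Nc Λ), ← Complex.exp_add]
  congr 2
  field_simp
  linear_combination (I * Λ) * ofReal_sqrt_two_sq

section Robin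

variable {P M γ : ℂ} {θ α : ℝ}

lemma robin_condition_iff (hP : P ≠ 0) (hγ : γ * M = exp (θ * I) * P)
    (hc : 1 + Real.cos θ ≠ 0) :
    ((1 - I) / Real.sqrt 2) * P + γ * (((1 + I) / Real.sqrt 2) * M) = α * (P + γ * M) ↔
      Real.sqrt 2 * (1 + Real.cos θ) * α = 1 + Real.cos θ - Real.sin θ := by
  have hlhs : ((1 - I) / Real.sqrt 2) * P + γ * (((1 + I) / Real.sqrt 2) * M) =
      ((1 - I) + (1 + I) * exp (θ * I)) / Real.sqrt 2 * P := by
    rw [mul_left_comm γ, hγ]; ring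
  have hrhs : α * (P + γ * M) = ((Real.sqrt 2 * α : ℝ) * (1 + exp (θ * I))) / Real.sqrt 2 * P := by
    rw [hγ]; push_cast; field_simp
  rw [hlhs, hrhs, mul_left_inj' hP, div_left_inj' ofReal_sqrt_two_ne_zero,
    one_sub_I_add_one_add_I_mul_exp_eq_iff hc, ← mul_assoc, mul_comm _ (Real.sqrt 2)]

lemma robin_condition_neg_iff (hP : P ≠ 0) (hγ : γ * M = exp (θ * I) * P)
    (hc : 1 + Real.cos θ ≠ 0) :
    ((-1 + I) / Real.sqrt 2) * P + γ * (((-1 - I) / Real.sqrt 2) * M) = α * (P + γ * M) ↔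
      Real.sqrt 2 * (1 + Real.cos θ) * α = -(1 + Real.cos θ - Real.sin θ) := by
  have hneg : ((-1 + I) / Real.sqrt 2) * P + γ * (((-1 - I) / Real.sqrt 2) * M) =
      -(((1 - I) / Real.sqrt 2) * P + γ * (((1 + I) / Real.sqrt 2) * M)) := by ring
  rw [hneg, neg_eq_iff_eq_neg, ← neg_mul, ← ofReal_neg, robin_condition_iff hP hγ hc,
    mul_neg, neg_eq_iff_eq_neg]

end Robin

theorem stmt6_general (Λ : ℝ)
    (θL θR : ℝ)
    (hθL : θL ∈ Set.Ico 0 π ∪ Set.Ioo π (2 * π))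
    (hθR : θR ∈ Set.Ico 0 π ∪ Set.Ioo π (2 * π))
    (αL αR : ℝ)
    (γL γR : ℂ)
    (hγL : γL = Complex.exp (Complex.I * (θL + Real.sqrt 2 * Λ)))
    (hγR : γR = Complex.exp (Complex.I * (θR + Real.sqrt 2 * Λ))) :
    (∀ cL cR : ℂ,
      cL * (((1 - Complex.I) / Real.sqrt 2) * LpB Λ +
          γL * (((1 + Complex.I) / Real.sqrt 2) * LmB Λ)) =
        (αL : ℂ) * (cL * (LpB Λ + γL * LmB Λ)) ∧
      cR * (((-1 + Complex.I) / Real.sqrt 2) * RpB Λ +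
          γR * (((-1 - Complex.I) / Real.sqrt 2) * RmB Λ)) =
        (αR : ℂ) * (cR * (RpB Λ + γR * RmB Λ))) ↔
    (Real.sqrt 2 * (1 + Real.cos θL) * αL = 1 + Real.cos θL - Real.sin θL ∧
     Real.sqrt 2 * (1 + Real.cos θR) * αR = -(1 + Real.cos θR - Real.sin θR)) := by
  have hc : ∀ θ ∈ Set.Ico 0 π ∪ Set.Ioo π (2 * π), 1 + Real.cos θ ≠ 0 := by
    rintro θ (⟨h₀, hπ⟩ | ⟨hπ, h₂⟩)
    · exact one_add_cos_ne_zero (by linarith [pi_pos]) (by linarith) hπ.ne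
    · exact one_add_cos_ne_zero (by linarith [pi_pos]) (by linarith) hπ.ne'
  subst hγL hγR
  rw [← robin_condition_iff (LpB_ne_zero Λ) (exp_mul_LmB Λ θL) (hc θL hθL),
    ← robin_condition_neg_iff (RpB_ne_zero Λ) (exp_mul_RmB Λ θR) (hc θR hθR)]
  constructor
  · intro h
    simpa using h 1 1
  · rintro ⟨hL, hR⟩ cL cR
    exact ⟨by rw [hL]; ring, by rw [hR]; ring⟩

/-- Lemma 1 of the paper: for `Λ > 0`, `θ_L, θ_R ∈ [0,π) ∪ (π,2π)`,
`α_L, α_R ∈ ℝ`, `γ_L = e^{i(θ_L+√2Λ)}`, `γ_R = e^{i(θ_R+√2Λ)}`, the Robin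
boundary conditions hold for every `ψ = c_L(L₊+γ_L L₋) + c_R(R₊+γ_R R₋)`
iff `√2(1+cos θ)α = ±(1+cos θ - sin θ)` on each side. -/
theorem stmt6 (Λ : ℝ) (hΛ : 0 < Λ)
    (θL θR : ℝ)
    (hθL : θL ∈ Set.Ico 0 π ∪ Set.Ioo π (2 * π))
    (hθR : θR ∈ Set.Ico 0 π ∪ Set.Ioo π (2 * π))
    (αL αR : ℝ)
    (γL γR : ℂ)
    (hγL : γL = Complex.exp (Complex.I * (θL + Real.sqrt 2 * Λ)))
    (hγR : γR = Complex.exp (Complex.I * (θR + Real.sqrt 2 * Λ))) :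
    (∀ cL cR : ℂ,
      cL * (((1 - Complex.I) / Real.sqrt 2) * LpB Λ +
          γL * (((1 + Complex.I) / Real.sqrt 2) * LmB Λ)) =
        (αL : ℂ) * (cL * (LpB Λ + γL * LmB Λ)) ∧
      cR * (((-1 + Complex.I) / Real.sqrt 2) * RpB Λ +
          γR * (((-1 - Complex.I) / Real.sqrt 2) * RmB Λ)) =
        (αR : ℂ) * (cR * (RpB Λ + γR * RmB Λ))) ↔
    (Real.sqrt 2 * (1 + Real.cos θL) * αL = 1 + Real.cos θL - Real.sin θL ∧
     Real.sqrt 2 * (1 + Real.cos θR) * αR = -(1 + Real.cos θR - Real.sin θR)) :=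
  stmt6_general Λ θL θR hθL hθR αL αR γL γR hγL hγR
end

section
/- Fix Λ > 0 and θ ∈ [0,2π), and set γ_→ := e^{i(θ + √2Λ + 3π/4)}, γ_← := e^{i(−θ + √2Λ + 3π/4)}, f := L₊ + γ_→·R₋, g := R₊ + γ_←·L₋. Then the one-sided boundary values satisfy f(Λ) = e^{i(θ + 3π/4)}·f(−Λ) and g(Λ) = e^{i(θ − 3π/4)}·g(−Λ); equivalently, f(Λ) = −e^{i(θ − π/4)}·f(−Λ) and g(Λ) = −e^{i(θ + π/4)}·g(−Λ). -/
open ComplexConjugate Real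

/-! The factor `e^{i√2Λ}` contained in `γ_→` and `γ_←` is exactly the relative phase of the
decaying modes at the two junctions, because `(-1 ∓ i)Λ/√2 ± i√2Λ = (-1 ± i)Λ/√2`
(as `2/√2 = √2`). What is left over is the phase `e^{±i(θ + 3π/4)}`, and the second form of
the statement is `e^{iπ} = -1`. -/

theorem I_mul_sqrt_two_mul_add_div_sqrt_two (z : ℂ) :
    Complex.I * (Real.sqrt 2 * z) + (-1 - Complex.I) * z / Real.sqrt 2 =
      (-1 + Complex.I) * z / Real.sqrt 2 := by
  have hs : (Real.sqrt 2 : ℂ) ^ 2 = 2 := by exact_mod_cast Real.sq_sqrt zero_le_two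
  have hs0 : (Real.sqrt 2 : ℂ) ≠ 0 := by exact_mod_cast (Real.sqrt_pos.2 two_pos).ne'
  field_simp
  linear_combination (Complex.I * z) * hs

theorem exp_I_mul_sqrt_two_mul_mul_RmB (Λ : ℝ) :
    Complex.exp (Complex.I * (Real.sqrt 2 * Λ)) * RmB Λ = LpB Λ := by
  rw [RmB, LpB, mul_left_comm, ← Complex.exp_add]
  congr 2
  linear_combination I_mul_sqrt_two_mul_add_div_sqrt_two Λ

theorem RpB_eq_exp_I_mul_sqrt_two_mul_mul_LmB (Λ : ℝ) :
    RpB Λ = Complex.exp (Complex.I * (Real.sqrt 2 * Λ)) * LmB Λ := by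
  rw [RpB, LmB, mul_left_comm, ← Complex.exp_add]
  congr 2
  linear_combination -I_mul_sqrt_two_mul_add_div_sqrt_two Λ

theorem stmt14_general (Λ : ℝ) (θ : ℝ)
    (γr γl : ℂ)
    (hγr : γr = Complex.exp (Complex.I * (θ + Real.sqrt 2 * Λ + 3 * π / 4)))
    (hγl : γl = Complex.exp (Complex.I * (-θ + Real.sqrt 2 * Λ + 3 * π / 4)))
    (fBm fBp gBm gBp : ℂ)
    (hfBm : fBm = LpB Λ) (hfBp : fBp = γr * RmB Λ)
    (hgBm : gBm = γl * LmB Λ) (hgBp : gBp = RpB Λ) :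
    (fBp = Complex.exp (Complex.I * (θ + 3 * π / 4)) * fBm ∧
     gBp = Complex.exp (Complex.I * (θ - 3 * π / 4)) * gBm) ∧
    (fBp = -(Complex.exp (Complex.I * (θ - π / 4)) * fBm) ∧
     gBp = -(Complex.exp (Complex.I * (θ + π / 4)) * gBm)) := by
  subst hγr hγl hfBm hfBp hgBm hgBp
  have hf : Complex.exp (Complex.I * (θ + Real.sqrt 2 * Λ + 3 * π / 4)) * RmB Λ =
      Complex.exp (Complex.I * (θ + 3 * π / 4)) * LpB Λ := by
    rw [← exp_I_mul_sqrt_two_mul_mul_RmB, ← mul_assoc, ← Complex.exp_add]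
    ring_nf
  have hg : RpB Λ = Complex.exp (Complex.I * (θ - 3 * π / 4)) *
      (Complex.exp (Complex.I * (-θ + Real.sqrt 2 * Λ + 3 * π / 4)) * LmB Λ) := by
    rw [RpB_eq_exp_I_mul_sqrt_two_mul_mul_LmB, ← mul_assoc (Complex.exp _), ← Complex.exp_add]
    ring_nf
  have hπf : Complex.exp (Complex.I * (θ + 3 * π / 4)) =
      -Complex.exp (Complex.I * (θ - π / 4)) := by
    rw [← Complex.exp_add_pi_mul_I]
    ring_nf
  have hπg : Complex.exp (Complex.I * (θ - 3 * π / 4)) =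
      -Complex.exp (Complex.I * (θ + π / 4)) := by
    rw [← Complex.exp_sub_pi_mul_I]
    ring_nf
  refine ⟨⟨hf, hg⟩, ?_, ?_⟩
  · rw [hf, hπf, neg_mul]
  · rw [hg, hπg, neg_mul]

/-- Proposition 3, part 2 of the paper: with `γ_→ = e^{i(θ+√2Λ+3π/4)}` and
`γ_← = e^{i(-θ+√2Λ+3π/4)}`, the boundary values of `f = L₊ + γ_→ R₋` and
`g = R₊ + γ_← L₋` satisfy `f(Λ) = e^{i(θ+3π/4)} f(-Λ)`,
`g(Λ) = e^{i(θ-3π/4)} g(-Λ)`, equivalently `f(Λ) = -e^{i(θ-π/4)} f(-Λ)`,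
`g(Λ) = -e^{i(θ+π/4)} g(-Λ)`. -/
theorem stmt14 (Λ : ℝ) (hΛ : 0 < Λ) (θ : ℝ) (hθ0 : 0 ≤ θ) (hθ2 : θ < 2 * π)
    (γr γl : ℂ)
    (hγr : γr = Complex.exp (Complex.I * (θ + Real.sqrt 2 * Λ + 3 * π / 4)))
    (hγl : γl = Complex.exp (Complex.I * (-θ + Real.sqrt 2 * Λ + 3 * π / 4)))
    (fBm fBp gBm gBp : ℂ)
    (hfBm : fBm = LpB Λ) (hfBp : fBp = γr * RmB Λ)
    (hgBm : gBm = γl * LmB Λ) (hgBp : gBp = RpB Λ) :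
    (fBp = Complex.exp (Complex.I * (θ + 3 * π / 4)) * fBm ∧
     gBp = Complex.exp (Complex.I * (θ - 3 * π / 4)) * gBm) ∧
    (fBp = -(Complex.exp (Complex.I * (θ - π / 4)) * fBm) ∧
     gBp = -(Complex.exp (Complex.I * (θ + π / 4)) * gBm)) :=
  stmt14_general Λ θ γr γl hγr hγl fBm fBp gBm gBp hfBm hfBp hgBm hgBp
end

section
/- Fix Λ > 0 and θ ∈ [0,2π), and set γ_→ := e^{i(θ + √2Λ + 3π/4)}, γ_← := e^{i(−θ + √2Λ + 3π/4)}, f := L₊ + γ_→·R₋, g := R₊ + γ_←·L₋. Let f″ and g″ denote their second derivatives on Ω_Λ := (−∞,−Λ) ∪ (Λ,∞), namely f″ = −i·L₊ on (−∞,−Λ) and f″ = i·γ_→·R₋ on (Λ,∞), g″ = i·γ_←·L₋ on (−∞,−Λ) and g″ = −i·R₊ on (Λ,∞). Then f and g are H₀-diagonal: ∫_{Ω_Λ} ( conj(f(x))·g(x) + conj(f″(x))·g″(x) ) dx = 0. -/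
/-
On each half-line of `Ω_Λ`, `f'' = c f` and `g'' = d g` with `conj c · d = -1`
(`c = -i, d = i` on `(-∞, -Λ)`, `c = i, d = -i` on `(Λ, ∞)`), so the integrand
`conj f · g + conj f'' · g''` vanishes pointwise.
-/

open ComplexConjugate Real

open MeasureTheory Set

theorem conj_mul_add_conj_mul_mul_eq_zero {c d : ℂ} (h : conj c * d = -1) (u v : ℂ) :
    conj u * v + conj (c * u) * (d * v) = 0 := by
  rw [map_mul]
  linear_combination conj u * v * h

section Vanishing

variable {Λ x : ℝ}

theorem Lp_eq_zero (hx : -Λ ≤ x) : Lp Λ x = 0 := if_neg hx.not_gt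

theorem Lm_eq_zero (hx : -Λ ≤ x) : Lm Λ x = 0 := if_neg hx.not_gt

theorem Rp_eq_zero (hx : x ≤ Λ) : Rp Λ x = 0 := if_neg hx.not_gt

theorem Rm_eq_zero (hx : x ≤ Λ) : Rm Λ x = 0 := if_neg hx.not_gt

end Vanishing

theorem stmt15_general (Λ : ℝ) (hΛ : 0 < Λ)
    (γr γl : ℂ)
    (f g f'' g'' : ℝ → ℂ)
    (hf : f = fun x => Lp Λ x + γr * Rm Λ x)
    (hg : g = fun x => Rp Λ x + γl * Lm Λ x)
    (hf'' : f'' = fun x => -Complex.I * Lp Λ x + Complex.I * (γr * Rm Λ x))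
    (hg'' : g'' = fun x => Complex.I * (γl * Lm Λ x) - Complex.I * Rp Λ x) :
    (∫ x in Set.Iio (-Λ) ∪ Set.Ioi Λ,
      (conj (f x) * g x + conj (f'' x) * g'' x)) = 0 := by
  subst hf hg hf'' hg''
  refine setIntegral_eq_zero_of_forall_eq_zero fun x hx => ?_
  rcases hx with hx | hx
  · have hle : x ≤ Λ := by linarith [mem_Iio.1 hx]
    simp only [Rp_eq_zero hle, Rm_eq_zero hle, mul_zero, add_zero, zero_add, sub_zero]
    exact conj_mul_add_conj_mul_mul_eq_zero (by simp) _ _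
  · have hle : -Λ ≤ x := by linarith [mem_Ioi.1 hx]
    simp only [Lp_eq_zero hle, Lm_eq_zero hle, mul_zero, add_zero, zero_add, zero_sub, ← neg_mul]
    exact conj_mul_add_conj_mul_mul_eq_zero (by simp) _ _

/-- Proposition 3, part 1 of the paper: `f = L₊ + γ_→ R₋` and
`g = R₊ + γ_← L₋` are `H₀`-diagonal:
`∫_{Ω_Λ} (conj f · g + conj f'' · g'') = 0`, where on `Ω_Λ` one has
`f'' = -i L₊ + i γ_→ R₋` and `g'' = i γ_← L₋ - i R₊`. -/
theorem stmt15 (Λ : ℝ) (hΛ : 0 < Λ) (θ : ℝ) (hθ0 : 0 ≤ θ) (hθ2 : θ < 2 * π)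
    (γr γl : ℂ)
    (hγr : γr = Complex.exp (Complex.I * (θ + Real.sqrt 2 * Λ + 3 * π / 4)))
    (hγl : γl = Complex.exp (Complex.I * (-θ + Real.sqrt 2 * Λ + 3 * π / 4)))
    (f g f'' g'' : ℝ → ℂ)
    (hf : f = fun x => Lp Λ x + γr * Rm Λ x)
    (hg : g = fun x => Rp Λ x + γl * Lm Λ x)
    (hf'' : f'' = fun x => -Complex.I * Lp Λ x + Complex.I * (γr * Rm Λ x))
    (hg'' : g'' = fun x => Complex.I * (γl * Lm Λ x) - Complex.I * Rp Λ x) :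
    (∫ x in Set.Iio (-Λ) ∪ Set.Ioi Λ,
      (conj (f x) * g x + conj (f'' x) * g'' x)) = 0 :=
  stmt15_general Λ hΛ γr γl f g f'' g'' hf hg hf'' hg''
end

section
/- Fix Λ > 0 and unimodular γ_→, γ_← ∈ ℂ, and let f := L₊ + γ_→·R₋ and g := R₊ + γ_←·L₋ with one-sided boundary values as given. For all a_L, a_R, b_L, b_R ∈ ℂ, let φ := a_L·f + a_R·g and ψ := b_L·f + b_R·g, with boundary values φ(∓Λ), φ′(∓Λ), ψ(∓Λ), ψ′(∓Λ) given by the corresponding linear combinations of the boundary values of f and g. Then the Wronskian defect vanishes: (conj(φ′(−Λ))·ψ(−Λ) − conj(φ(−Λ))·ψ′(−Λ)) − (conj(φ′(Λ))·ψ(Λ) − conj(φ(Λ))·ψ′(Λ)) = 0. -/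
/-!
At each endpoint the boundary data of `f` and `g` are eigenvectors of `u ↦ u'` with conjugate
eigenvalues `α` and `conj α`, so the local Wronskian of `φ` and `ψ` has no cross terms and equals
`(conj α - α) (conj a_L b_L |f|² - conj a_R b_R |g|²)`. Since `|γ_→| = |γ_←| = 1`, both `|f|²`
and `|g|²` equal `|R₊(Λ)|²` at both endpoints, and `conj α - α = 2 i sin θ` with
`θ = π/4` at `-Λ` and `θ = 3π/4` at `Λ`; these sines agree.
-/

open ComplexConjugate Real

open Complex in
theorem conj_exp_neg_I_mul_sub (θ : ℝ) :
    conj (exp (-(I * θ))) - exp (-(I * θ)) = 2 * I * Real.sin θ := by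
  rw [← exp_conj]
  simp only [map_neg, map_mul, conj_I, conj_ofReal, neg_mul, neg_neg]
  rw [mul_comm, exp_mul_I, ← neg_mul, mul_comm, exp_mul_I, Complex.cos_neg, Complex.sin_neg,
    ofReal_sin]
  ring

theorem wronskian_comb_of_conj_eigen (α a b c d u v : ℂ) :
    conj (a * (α * u) + b * (conj α * v)) * (c * u + d * v) -
        conj (a * u + b * v) * (c * (α * u) + d * (conj α * v)) =
      (conj α - α) * (conj a * c * Complex.normSq u - conj b * d * Complex.normSq v) := by
  simp only [Complex.normSq_eq_conj_mul_self, map_add, map_mul, Complex.conj_conj]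
  ring

theorem normSq_mul_conj_of_norm_eq_one {γ : ℂ} (hγ : ‖γ‖ = 1) (z : ℂ) :
    Complex.normSq (γ * conj z) = Complex.normSq z := by
  rw [Complex.normSq_mul, Complex.normSq_conj, Complex.normSq_eq_norm_sq, hγ, one_pow, one_mul]

theorem stmt16_general (Λ : ℝ) (γr γl : ℂ)
    (hγr : ‖γr‖ = 1) (hγl : ‖γl‖ = 1)
    (fBm fBm' fBp fBp' gBm gBm' gBp gBp' : ℂ)
    (hfBm : fBm = RpB Λ)
    (hfBm' : fBm' = Complex.exp (-(Complex.I * (π / 4))) * RpB Λ)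
    (hfBp : fBp = γr * conj (RpB Λ))
    (hfBp' : fBp' = γr * (Complex.exp (-(Complex.I * (3 * π / 4))) * conj (RpB Λ)))
    (hgBm : gBm = γl * conj (RpB Λ))
    (hgBm' : gBm' = γl * (Complex.exp (Complex.I * (π / 4)) * conj (RpB Λ)))
    (hgBp : gBp = RpB Λ)
    (hgBp' : gBp' = Complex.exp (Complex.I * (3 * π / 4)) * RpB Λ) :
    ∀ aL aR bL bR : ℂ,
      (conj (aL * fBm' + aR * gBm') * (bL * fBm + bR * gBm) -
        conj (aL * fBm + aR * gBm) * (bL * fBm' + bR * gBm')) -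
      (conj (aL * fBp' + aR * gBp') * (bL * fBp + bR * gBp) -
        conj (aL * fBp + aR * gBp) * (bL * fBp' + bR * gBp')) = 0 := by
  intro aL aR bL bR
  have hπ4 : (π : ℂ) / 4 = ((π / 4 : ℝ) : ℂ) := by push_cast; ring
  have h3π4 : 3 * (π : ℂ) / 4 = ((3 * π / 4 : ℝ) : ℂ) := by push_cast; ring
  have hconj (θ : ℝ) : Complex.exp (Complex.I * θ) = conj (Complex.exp (-(Complex.I * θ))) := by
    simp [← Complex.exp_conj]
  have hf_left : fBm' = Complex.exp (-(Complex.I * (π / 4))) * fBm := by rw [hfBm', hfBm]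
  have hg_left : gBm' = conj (Complex.exp (-(Complex.I * (π / 4)))) * gBm := by
    rw [hgBm', hgBm, hπ4, hconj]; ring
  have hf_right : fBp' = Complex.exp (-(Complex.I * (3 * π / 4))) * fBp := by
    rw [hfBp', hfBp]; ring
  have hg_right : gBp' = conj (Complex.exp (-(Complex.I * (3 * π / 4)))) * gBp := by
    rw [hgBp', hgBp, h3π4, hconj]
  rw [hf_left, hg_left, hf_right, hg_right, wronskian_comb_of_conj_eigen,
    wronskian_comb_of_conj_eigen, hfBm, hgBm, hfBp, hgBp, normSq_mul_conj_of_norm_eq_one hγr,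
    normSq_mul_conj_of_norm_eq_one hγl, hπ4, h3π4, conj_exp_neg_I_mul_sub, conj_exp_neg_I_mul_sub,
    show 3 * π / 4 = π - π / 4 by ring, Real.sin_pi_sub]
  ring

/-- The key symmetry computation in the proof of Theorem 4, part 1 of the
paper: for all `φ = a_L f + a_R g` and `ψ = b_L f + b_R g`, the Wronskian
defect `W(φ,ψ)` vanishes, where the boundary values of `f = L₊ + γ_→ R₋`
and `g = R₊ + γ_← L₋` are as given. -/
theorem stmt16 (Λ : ℝ) (hΛ : 0 < Λ) (γr γl : ℂ)
    (hγr : ‖γr‖ = 1) (hγl : ‖γl‖ = 1)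
    (fBm fBm' fBp fBp' gBm gBm' gBp gBp' : ℂ)
    (hfBm : fBm = RpB Λ)
    (hfBm' : fBm' = Complex.exp (-(Complex.I * (π / 4))) * RpB Λ)
    (hfBp : fBp = γr * conj (RpB Λ))
    (hfBp' : fBp' = γr * (Complex.exp (-(Complex.I * (3 * π / 4))) * conj (RpB Λ)))
    (hgBm : gBm = γl * conj (RpB Λ))
    (hgBm' : gBm' = γl * (Complex.exp (Complex.I * (π / 4)) * conj (RpB Λ)))
    (hgBp : gBp = RpB Λ)
    (hgBp' : gBp' = Complex.exp (Complex.I * (3 * π / 4)) * RpB Λ) :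
    ∀ aL aR bL bR : ℂ,
      (conj (aL * fBm' + aR * gBm') * (bL * fBm + bR * gBm) -
        conj (aL * fBm + aR * gBm) * (bL * fBm' + bR * gBm')) -
      (conj (aL * fBp' + aR * gBp') * (bL * fBp + bR * gBp) -
        conj (aL * fBp + aR * gBp) * (bL * fBp' + bR * gBp')) = 0 :=
  stmt16_general Λ γr γl hγr hγl fBm fBm' fBp fBp' gBm gBm' gBp gBp' hfBm hfBm' hfBp hfBp' hgBm
    hgBm' hgBp hgBp'
end
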